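/- arXiv:math/0508561 — 2 statements merged into one kernel-verified Lean document; each statement's English description precedes it below -/
import Mathlib

section
/- Let f₁, …, f_N be complex-valued functions of one complex variable, each analytic at a point x ∈ ℂ and not identically zero near x, and let mⱼ ∈ ℕ be the vanishing order of fⱼ at x. Define φ(z) = log(Σ_{j=1}^N |fⱼ(z)|²)^{1/2}. Then liminf_{z→x, z≠x} φ(z)/log|z−x| = min_{1≤j≤N} mⱼ. -/
open Filter Topology

/-! On a punctured neighbourhood of `x`, put `F z := (f₁ z, …, f_N z)` in `EuclideanSpace ℂ (Fin N)`,
so that `φ z = log ‖F z‖`. With `μ := min_j mⱼ` we have `F z = (z - x) ^ μ • G z`, where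
`G z := ((z - x) ^ (mⱼ - μ) * gⱼ z)ⱼ` is continuous at `x` with `G x ≠ 0` (its coordinate at a
minimising index is `gⱼ x`). Hence `φ z = μ log ‖z - x‖ + log ‖G z‖`, the second term converges
while `log ‖z - x‖ → -∞`, and `φ z / log ‖z - x‖` even converges to `μ`. -/

theorem tendsto_log_norm_sub_nhdsNE_atBot {V : Type*} [NormedAddCommGroup V] (x : V) :
    Tendsto (fun z => Real.log ‖z - x‖) (𝓝[≠] x) atBot :=
  Real.tendsto_log_nhdsGT_zero.comp (tendsto_norm_sub_self_nhdsNE x)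

section LelongNumber

variable {𝕜 E : Type*} [NormedField 𝕜] [NormedAddCommGroup E] [NormedSpace 𝕜 E]

theorem tendsto_log_norm_div_log_norm_sub_of_eventuallyEq_pow_smul {x : 𝕜} {F G : 𝕜 → E}
    {μ : ℕ} (hG : ContinuousAt G x) (hGx : G x ≠ 0)
    (hFG : ∀ᶠ z in 𝓝 x, F z = (z - x) ^ μ • G z) :
    Tendsto (fun z => Real.log ‖F z‖ / Real.log ‖z - x‖) (𝓝[≠] x) (𝓝 μ) := by
  have hlog := tendsto_log_norm_sub_nhdsNE_atBot x
  have hlogG : Tendsto (fun z => Real.log ‖G z‖) (𝓝[≠] x) (𝓝 (Real.log ‖G x‖)) :=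
    (hG.norm.log (norm_ne_zero_iff.mpr hGx)).tendsto.mono_left nhdsWithin_le_nhds
  have hsplit : ∀ᶠ z in 𝓝[≠] x, Real.log ‖F z‖ / Real.log ‖z - x‖ =
      μ + Real.log ‖G z‖ / Real.log ‖z - x‖ := by
    filter_upwards [nhdsWithin_le_nhds hFG, nhdsWithin_le_nhds (hG.eventually_ne hGx),
      hlog.eventually_ne_atBot 0, self_mem_nhdsWithin] with z hF hGz hL hz
    have hzx : ‖z - x‖ ≠ 0 := norm_ne_zero_iff.mpr (sub_ne_zero.mpr hz)
    rw [hF, norm_smul, norm_pow, Real.log_mul (pow_ne_zero _ hzx) (norm_ne_zero_iff.mpr hGz),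
      Real.log_pow, add_div, mul_div_cancel_right₀ _ hL]
  simpa using (tendsto_const_nhds.add (hlogG.div_atBot hlog)).congr' (EventuallyEq.symm hsplit)

end LelongNumber

theorem liminf_log_sum_sq_one_var_eq_min_order_general
    {N : ℕ} (hN : 0 < N) (x : ℂ)
    (f : Fin N → ℂ → ℂ) (m : Fin N → ℕ) (g : Fin N → ℂ → ℂ)
    (hg : ∀ j, AnalyticAt ℂ (g j) x) (hg0 : ∀ j, g j x ≠ 0)
    (hfg : ∀ j, ∀ᶠ z in 𝓝 x, f j z = (z - x) ^ m j * g j z) :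
    Filter.liminf
      (fun z => Real.log (Real.sqrt (∑ j, ‖f j z‖ ^ 2)) / Real.log ‖z - x‖)
      (𝓝[≠] x) = ⨅ j, (m j : ℝ) := by
  have : Nonempty (Fin N) := ⟨⟨0, hN⟩⟩
  obtain ⟨j₀, hj₀⟩ := Finite.exists_min m
  have hmin : ⨅ j, (m j : ℝ) = m j₀ :=
    le_antisymm (ciInf_le (Finite.bddBelow_range _) j₀) (le_ciInf fun j => by exact_mod_cast hj₀ j)
  let F : ℂ → EuclideanSpace ℂ (Fin N) := fun z => WithLp.toLp 2 fun j => f j z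
  let G : ℂ → EuclideanSpace ℂ (Fin N) := fun z =>
    WithLp.toLp 2 fun j => (z - x) ^ (m j - m j₀) * g j z
  have hG : ContinuousAt G x :=
    (PiLp.continuous_toLp 2 _).continuousAt.comp <| continuousAt_pi.mpr fun j =>
      ((continuousAt_id.sub continuousAt_const).pow _).mul (hg j).continuousAt
  have hGx : G x ≠ 0 := fun h => hg0 j₀ <| by
    simpa [G] using congrArg (fun v : EuclideanSpace ℂ (Fin N) => v j₀) h
  have hFG : ∀ᶠ z in 𝓝 x, F z = (z - x) ^ m j₀ • G z := by
    filter_upwards [eventually_all.mpr hfg] with z hz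
    ext j
    simp only [F, G, PiLp.smul_apply, smul_eq_mul, hz j, ← mul_assoc, ← pow_add,
      Nat.add_sub_cancel' (hj₀ j)]
  have hnormF : ∀ z, ‖F z‖ = √(∑ j, ‖f j z‖ ^ 2) := fun z => EuclideanSpace.norm_eq _
  rw [hmin, ← (tendsto_log_norm_div_log_norm_sub_of_eventuallyEq_pow_smul hG hGx hFG).liminf_eq]
  simp only [hnormF]

/-- For `f₁, …, f_N` analytic at `x ∈ ℂ` with vanishing orders `m₁, …, m_N`
(i.e. `fⱼ(z) = (z-x)^{mⱼ} gⱼ(z)` near `x` with `gⱼ` analytic, `gⱼ(x) ≠ 0`), the Lelong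
number at `x` of `φ(z) = log (∑ⱼ |fⱼ(z)|²)^{1/2}` equals `min_j mⱼ`. -/
theorem liminf_log_sum_sq_one_var_eq_min_order
    {N : ℕ} (hN : 0 < N) (x : ℂ)
    (f : Fin N → ℂ → ℂ) (m : Fin N → ℕ) (g : Fin N → ℂ → ℂ)
    (hf : ∀ j, AnalyticAt ℂ (f j) x)
    (hg : ∀ j, AnalyticAt ℂ (g j) x) (hg0 : ∀ j, g j x ≠ 0)
    (hfg : ∀ j, ∀ᶠ z in 𝓝 x, f j z = (z - x) ^ m j * g j z) :
    Filter.liminf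
      (fun z => Real.log (Real.sqrt (∑ j, ‖f j z‖ ^ 2)) / Real.log ‖z - x‖)
      (𝓝[≠] x) = ⨅ j, (m j : ℝ) :=
  liminf_log_sum_sq_one_var_eq_min_order_general hN x f m g hg hg0 hfg
end

section
/- Let x ∈ ℂⁿ, let s ≥ 1 be an integer, and let f₁, …, f_n be holomorphic functions defined on a neighborhood of x such that for each i = 1, …, n the function z ↦ fᵢ(z) − (zᵢ − xᵢ)^s vanishes to order at least s+1 at x (i.e., the s-jet of fᵢ at x is the monomial (zᵢ − xᵢ)^s). Then x is an isolated point of the common zero set {z : f₁(z) = ⋯ = f_n(z) = 0}; that is, there is a neighborhood U of x such that x is the only common zero of f₁, …, f_n in U. -/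
/-!
Write `z = x + y`. Analyticity and the jet condition give `fᵢ(x + y) = yᵢ ^ s + O(‖y‖ ^ (s + 1))`.
Comparing with the largest coordinate, the map `y ↦ (yᵢ ^ s)ᵢ` is bounded below by `c ‖y‖ ^ s`
for some `c > 0`, so a common zero `y ≠ 0` would give `c ‖y‖ ^ s = O(‖y‖ ^ (s + 1))`, which fails
for small `y`.
-/

open Filter Topology Asymptotics

section Jet

variable {𝕜 E F : Type*} [NontriviallyNormedField 𝕜] [CharZero 𝕜]
  [NormedAddCommGroup E] [NormedSpace 𝕜 E] [NormedAddCommGroup F] [NormedSpace 𝕜 F]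
  [CompleteSpace F]

theorem AnalyticAt.isBigO_pow_of_iteratedFDeriv_eq_zero {g : E → F} {x : E} {m : ℕ}
    (hg : AnalyticAt 𝕜 g x) (h : ∀ k < m, iteratedFDeriv 𝕜 k g x = 0) :
    g =O[𝓝 x] fun z => ‖z - x‖ ^ m := by
  obtain ⟨p, r, hp⟩ := hg
  have hcoeff : ∀ k < m, ∀ y, p k (fun _ => y) = 0 := fun k hk y => by
    have := hp.factorial_smul y k
    rw [h k hk, zero_apply, ← Nat.cast_smul_eq_nsmul 𝕜] at this
    exact (smul_eq_zero.1 this).resolve_left (Nat.cast_ne_zero.2 k.factorial_ne_zero)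
  have hpartial : ∀ y, p.partialSum m y = 0 := fun y =>
    Finset.sum_eq_zero fun k hk => hcoeff k (Finset.mem_range.1 hk) y
  simpa [hpartial, Function.comp_def] using
    (hp.hasFPowerSeriesAt.isBigO_sub_partialSum_pow m).comp_tendsto
      (tendsto_sub_nhds_zero_iff.2 (tendsto_id (x := 𝓝 x)))

end Jet

theorem eventually_eq_of_eq_zero_of_sub_isLittleO {E G : Type*} [NormedAddCommGroup E]
    [SeminormedAddCommGroup G] {F P : E → G} {x : E} {s : ℕ} {c : ℝ} (hc : 0 < c)
    (hP : ∀ y, c * ‖y‖ ^ s ≤ ‖P y‖)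
    (hF : (fun z => F z - P (z - x)) =o[𝓝 x] fun z => ‖z - x‖ ^ s) :
    ∀ᶠ z in 𝓝 x, F z = 0 → z = x := by
  filter_upwards [hF.def (half_pos hc)] with z hz hFz
  rw [hFz, zero_sub, norm_neg, Real.norm_of_nonneg (by positivity)] at hz
  have : ‖z - x‖ ^ s ≤ 0 := by nlinarith [hP (z - x)]
  exact sub_eq_zero.1 (norm_eq_zero.1 (pow_eq_zero_iff'.1 (le_antisymm this (by positivity))).1)

theorem EuclideanSpace.norm_le_sqrt_card_mul {ι 𝕜 : Type*} [Fintype ι] [RCLike 𝕜]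
    {y : EuclideanSpace 𝕜 ι} {j : ι} (hj : ∀ i, ‖y i‖ ≤ ‖y j‖) :
    ‖y‖ ≤ √(Fintype.card ι) * ‖y j‖ := by
  rw [EuclideanSpace.norm_eq, ← Real.sqrt_sq (norm_nonneg (y j)), ← Real.sqrt_mul (by positivity)]
  gcongr
  calc ∑ i, ‖y i‖ ^ 2 ≤ ∑ _i : ι, ‖y j‖ ^ 2 := by gcongr with i; exact hj i
    _ = _ := by simp

theorem EuclideanSpace.exists_pos_mul_norm_pow_le_norm_pow {ι 𝕜 : Type*} [Fintype ι]
    [Nonempty ι] [RCLike 𝕜] (s : ℕ) :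
    ∃ c > 0, ∀ y : EuclideanSpace 𝕜 ι, c * ‖y‖ ^ s ≤ ‖fun i => y i ^ s‖ := by
  refine ⟨(√(Fintype.card ι) ^ s)⁻¹, by positivity, fun y => ?_⟩
  obtain ⟨j, hj⟩ := Finite.exists_max fun i => ‖y i‖
  rw [inv_mul_le_iff₀ (by positivity)]
  calc ‖y‖ ^ s ≤ (√(Fintype.card ι) * ‖y j‖) ^ s := by
        gcongr; exact EuclideanSpace.norm_le_sqrt_card_mul hj
    _ = √(Fintype.card ι) ^ s * ‖y j ^ s‖ := by rw [mul_pow, norm_pow]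
    _ ≤ √(Fintype.card ι) ^ s * ‖fun i => y i ^ s‖ := by
        gcongr; exact norm_le_pi_norm (fun i => y i ^ s) j

theorem isolated_common_zero_of_jets_general
    {n : ℕ} (Ω : Set (EuclideanSpace ℂ (Fin n)))
    (x : EuclideanSpace ℂ (Fin n)) (hx : x ∈ Ω)
    (s : ℕ)
    (f : Fin n → EuclideanSpace ℂ (Fin n) → ℂ)
    (hf : ∀ i, AnalyticOnNhd ℂ (f i) Ω)
    (hjet : ∀ i, ∀ k < s + 1,
      iteratedFDeriv ℂ k (fun z => f i z - (z i - x i) ^ s) x = 0) :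
    ∃ U ∈ 𝓝 x, ∀ z ∈ U, (∀ i, f i z = 0) → z = x := by
  rcases isEmpty_or_nonempty (Fin n) with _ | _
  · exact ⟨Set.univ, univ_mem, fun z _ _ => Subsingleton.elim z x⟩
  obtain ⟨c, hc, hP⟩ := EuclideanSpace.exists_pos_mul_norm_pow_le_norm_pow (𝕜 := ℂ) (ι := Fin n) s
  have hjetO : ∀ i, (fun z => f i z - (z i - x i) ^ s) =O[𝓝 x] fun z => ‖z - x‖ ^ (s + 1) :=
    fun i => ((hf i x hx).sub (((EuclideanSpace.proj i).analyticAt x).sub analyticAt_const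
      |>.pow s)).isBigO_pow_of_iteratedFDeriv_eq_zero (hjet i)
  have hpow : (fun z => ‖z - x‖ ^ (s + 1)) =o[𝓝 x] fun z => ‖z - x‖ ^ s :=
    (isLittleO_norm_pow_norm_pow (lt_add_one s)).comp_tendsto
      (tendsto_sub_nhds_zero_iff.2 tendsto_id)
  have hjeto : (fun z => (fun i => f i z) - fun i => (z - x) i ^ s) =o[𝓝 x]
      fun z => ‖z - x‖ ^ s :=
    isLittleO_pi.2 fun i => by simpa using (hjetO i).trans_isLittleO hpow
  exact eventually_iff_exists_mem.1 <|
    (eventually_eq_of_eq_zero_of_sub_isLittleO hc hP hjeto).mono fun z hz hfz => hz (funext hfz)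

/-- If `f₁, …, f_n` are holomorphic near `x ∈ ℂⁿ` and the `s`-jet of `fᵢ` at `x` is the
monomial `(zᵢ - xᵢ)^s` (i.e. `fᵢ(z) - (zᵢ - xᵢ)^s` vanishes to order at least `s+1` at
`x`), then `x` is an isolated point of the common zero set of `f₁, …, f_n`. -/
theorem isolated_common_zero_of_jets
    {n : ℕ} (Ω : Set (EuclideanSpace ℂ (Fin n))) (hΩ : IsOpen Ω)
    (x : EuclideanSpace ℂ (Fin n)) (hx : x ∈ Ω)
    (s : ℕ) (hs : 1 ≤ s)
    (f : Fin n → EuclideanSpace ℂ (Fin n) → ℂ)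
    (hf : ∀ i, AnalyticOnNhd ℂ (f i) Ω)
    (hjet : ∀ i, ∀ k < s + 1,
      iteratedFDeriv ℂ k (fun z => f i z - (z i - x i) ^ s) x = 0) :
    ∃ U ∈ 𝓝 x, ∀ z ∈ U, (∀ i, f i z = 0) → z = x :=
  isolated_common_zero_of_jets_general Ω x hx s f hf hjet
end
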